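/- arXiv:2206.05100 — 10 statements merged into one kernel-verified Lean document; each statement's English description precedes it below -/
import Mathlib

section
/- A k-ary regular operation is 1-uniform if and only if it equals the operation induced by some coherent modifier. -/
/-- A `k`-ary regular operation is 1-uniform if it commutes with preimages of
1-uniform (letter-to-letter) morphisms on tuples of regular languages. -/
def IsOneUniform (k : ℕ) (op : ∀ α : Type, (Fin k → Language α) → Language α) : Prop :=
  ∀ (α β : Type) (φ : α → β) (L : Fin k → Language β), (∀ i, (L i).IsRegular) →
    op α (fun i => {w : List α | w.map φ ∈ L i}) = {w : List α | w.map φ ∈ op β L}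

/-- A state configuration: a set of states with an initial state and a set of
final states. -/
structure StateConfig where
  Q : Type
  init : Q
  final : Set Q

/-- A `k`-ary modifier: an operation on transition configurations
`(Q, i, F, δ)` such that the state configuration of the output depends only on
the state configurations of the inputs (this is built into the data: `out`
depends only on the state configurations, and only the output transition
function `step` depends on the input transition functions). -/
structure Modifier (k : ℕ) where
  out : (Fin k → StateConfig) → StateConfig
  step : ∀ c : Fin k → StateConfig, (∀ i, (c i).Q → (c i).Q) → ((out c).Q → (out c).Q)

/-- The `i`-th input DFA determined by state configurations `c` and letterwise
transition functions `δ`. -/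
def inputDFA {k : ℕ} (c : Fin k → StateConfig) {α : Type}
    (δ : ∀ i, α → ((c i).Q → (c i).Q)) (i : Fin k) : DFA α (c i).Q :=
  ⟨fun q a => δ i a q, (c i).init, (c i).final⟩

/-- Applying a modifier to a `k`-tuple of DFAs, letter by letter. -/
def Modifier.apply {k : ℕ} (M : Modifier k) (c : Fin k → StateConfig) {α : Type}
    (δ : ∀ i, α → ((c i).Q → (c i).Q)) : DFA α (M.out c).Q :=
  ⟨fun q a => M.step c (fun i => δ i a) q, (M.out c).init, (M.out c).final⟩

/-- A modifier is coherent if the language of the output automaton depends only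
on the languages of the input automata. -/
def Modifier.Coherent {k : ℕ} (M : Modifier k) : Prop :=
  ∀ (α : Type) (c c' : Fin k → StateConfig)
    (δ : ∀ i, α → ((c i).Q → (c i).Q)) (δ' : ∀ i, α → ((c' i).Q → (c' i).Q)),
    (∀ i, Finite (c i).Q) → (∀ i, Finite (c' i).Q) →
    (∀ i, (inputDFA c δ i).accepts = (inputDFA c' δ' i).accepts) →
    (M.apply c δ).accepts = (M.apply c' δ').accepts

/-!
A 1-uniform operation is determined by its values on the "universal" inputs, whose alphabet is the
set of tuples of transition functions: any tuple of DFAs over `α` is the pullback of the universal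
one along the letter-to-letter morphism sending a letter to its tuple of transitions. So the
modifier whose output, on state configurations `c`, is the left-quotient automaton of the value of
the operation on the universal inputs over `c` induces the operation, and a modifier inducing an
operation is coherent. Conversely, a modifier acts letter by letter, so the induced operation
commutes with pullbacks along letter-to-letter morphisms.
-/

namespace Modifier

variable {k : ℕ}

/-- `⊗_M = op`. -/
def Induces (M : Modifier k) (op : ∀ α : Type, (Fin k → Language α) → Language α) : Prop :=
  ∀ (α : Type) (c : Fin k → StateConfig) (δ : ∀ i, α → ((c i).Q → (c i).Q)),
    (∀ i, Finite (c i).Q) →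
    op α (fun i => (inputDFA c δ i).accepts) = (M.apply c δ).accepts

theorem Induces.coherent {M : Modifier k} {op : ∀ α : Type, (Fin k → Language α) → Language α}
    (hM : M.Induces op) : M.Coherent := by
  intro α c c' δ δ' hc hc' hacc
  rw [← hM α c δ hc, ← hM α c' δ' hc', funext hacc]

theorem accepts_apply_comp (M : Modifier k) (c : Fin k → StateConfig) {α β : Type}
    (δ : ∀ i, β → ((c i).Q → (c i).Q)) (φ : α → β) :
    (M.apply c (fun i a => δ i (φ a))).accepts = List.map φ ⁻¹' (M.apply c δ).accepts :=
  DFA.accepts_comap (M.apply c δ) φ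

end Modifier

theorem accepts_inputDFA_comp {k : ℕ} (c : Fin k → StateConfig) {α β : Type}
    (δ : ∀ i, β → ((c i).Q → (c i).Q)) (φ : α → β) (i : Fin k) :
    (inputDFA c (fun i a => δ i (φ a)) i).accepts = List.map φ ⁻¹' (inputDFA c δ i).accepts :=
  DFA.accepts_comap (inputDFA c δ i) φ

theorem exists_inputDFA_accepts_eq {k : ℕ} {β : Type} {L : Fin k → Language β}
    (hL : ∀ i, (L i).IsRegular) :
    ∃ (c : Fin k → StateConfig) (δ : ∀ i, β → ((c i).Q → (c i).Q)),
      (∀ i, Finite (c i).Q) ∧ (fun i => (inputDFA c δ i).accepts) = L := by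
  choose σ _ B hB using hL
  exact ⟨fun i => ⟨σ i, (B i).start, (B i).accept⟩, fun i b q => (B i).step q b,
    fun i => inferInstance, funext hB⟩

theorem Modifier.Induces.isOneUniform {k : ℕ} {M : Modifier k}
    {op : ∀ α : Type, (Fin k → Language α) → Language α} (hM : M.Induces op) :
    IsOneUniform k op := by
  intro α β φ L hL
  obtain ⟨c, δ, hc, rfl⟩ := exists_inputDFA_accepts_eq hL
  have hpull := hM α c (fun i a => δ i (φ a)) hc
  rw [funext (accepts_inputDFA_comp c δ φ), M.accepts_apply_comp] at hpull
  rw [hM β c δ hc]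
  exact hpull

namespace UniversalInput

variable {k : ℕ}

abbrev Alphabet (c : Fin k → StateConfig) : Type := ∀ i, (c i).Q → (c i).Q

def letter (c : Fin k → StateConfig) {α : Type} (δ : ∀ i, α → ((c i).Q → (c i).Q)) (a : α) :
    Alphabet c :=
  fun i => δ i a

def universalDFA (c : Fin k → StateConfig) (i : Fin k) : DFA (Alphabet c) (c i).Q :=
  inputDFA c (fun i a => a i) i

def languages (c : Fin k → StateConfig) : Fin k → Language (Alphabet c) :=
  fun i => (universalDFA c i).accepts

theorem languages_isRegular (c : Fin k → StateConfig) (hc : ∀ i, Finite (c i).Q) (i : Fin k) :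
    (languages c i).IsRegular :=
  have := Fintype.ofFinite (c i).Q
  ⟨_, inferInstance, _, rfl⟩

theorem inputDFA_accepts_eq_preimage (c : Fin k → StateConfig) {α : Type}
    (δ : ∀ i, α → ((c i).Q → (c i).Q)) (i : Fin k) :
    (inputDFA c δ i).accepts = List.map (letter c δ) ⁻¹' languages c i :=
  DFA.accepts_comap (universalDFA c i) (letter c δ)

end UniversalInput

open UniversalInput in
def Modifier.ofOperation (k : ℕ) (op : ∀ α : Type, (Fin k → Language α) → Language α) :
    Modifier k where
  out c := ⟨_, (op _ (languages c)).toDFA.start, (op _ (languages c)).toDFA.accept⟩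
  step c a q := (op _ (languages c)).toDFA.step q a

open UniversalInput in
theorem Modifier.accepts_ofOperation_apply {k : ℕ}
    (op : ∀ α : Type, (Fin k → Language α) → Language α) (c : Fin k → StateConfig) {α : Type}
    (δ : ∀ i, α → ((c i).Q → (c i).Q)) :
    ((Modifier.ofOperation k op).apply c δ).accepts =
      List.map (letter c δ) ⁻¹' op _ (languages c) := by
  rw [← Language.accepts_toDFA (op _ (languages c))]
  exact DFA.accepts_comap _ _

open UniversalInput in
theorem IsOneUniform.ofOperation_induces {k : ℕ}
    {op : ∀ α : Type, (Fin k → Language α) → Language α} (h : IsOneUniform k op) :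
    (Modifier.ofOperation k op).Induces op := by
  intro α c δ hc
  simp only [inputDFA_accepts_eq_preimage, Modifier.accepts_ofOperation_apply]
  exact h α _ (letter c δ) (languages c) (languages_isRegular c hc)

theorem isOneUniform_iff_coherent_modifier_general (k : ℕ)
    (op : ∀ α : Type, (Fin k → Language α) → Language α) :
    IsOneUniform k op ↔
      ∃ M : Modifier k, M.Coherent ∧
        ∀ (α : Type) (c : Fin k → StateConfig) (δ : ∀ i, α → ((c i).Q → (c i).Q)),
          (∀ i, Finite (c i).Q) →
          op α (fun i => (inputDFA c δ i).accepts) = (M.apply c δ).accepts := by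
  constructor
  · intro h
    exact ⟨_, h.ofOperation_induces.coherent, h.ofOperation_induces⟩
  · rintro ⟨M, -, hM⟩
    exact Modifier.Induces.isOneUniform hM

/-- A `k`-ary regular operation is 1-uniform if and only if it is the operation
induced by some coherent modifier. -/
theorem isOneUniform_iff_coherent_modifier (k : ℕ)
    (op : ∀ α : Type, (Fin k → Language α) → Language α)
    (hreg : ∀ (α : Type) (L : Fin k → Language α),
      (∀ i, (L i).IsRegular) → (op α L).IsRegular) :
    IsOneUniform k op ↔
      ∃ M : Modifier k, M.Coherent ∧
        ∀ (α : Type) (c : Fin k → StateConfig) (δ : ∀ i, α → ((c i).Q → (c i).Q)),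
          (∀ i, Finite (c i).Q) →
          op α (fun i => (inputDFA c δ i).accepts) = (M.apply c δ).accepts :=
  isOneUniform_iff_coherent_modifier_general k op
end

section
/- Let T ⊆ [m] × [n] be a nonempty tableau that is a state of the automaton M_•^{F₁,F₂} and suppose the final zone F is contained in ([m]×{0}) ∪ ({0}×[n]). Let Δ be the finest equivalence relation on the crosses of T generated by (i,j) Δ (i,j') and (i,j) Δ (i',j) for crosses in the same row or column. If T is accessible from the initial state ∅, then Δ has exactly one equivalence class on T. -/
/-- The final zone `F = (F₁×[n]) • ([m]×F₂)` determined by a binary Boolean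
function `b` and final sets `F₁`, `F₂`. -/
def finalZone {m n : ℕ} (b : Bool → Bool → Bool)
    (F₁ : Finset (Fin m)) (F₂ : Finset (Fin n)) : Set (Fin m × Fin n) :=
  {p | b (decide (p.1 ∈ F₁)) (decide (p.2 ∈ F₂)) = true}

/-- The action of a pair of transformations on a tableau:
`T·(f,g) = {(f i, g j) | (i,j) ∈ T}`. -/
def act {m n : ℕ} (a : (Fin m → Fin m) × (Fin n → Fin n))
    (T : Set (Fin m × Fin n)) : Set (Fin m × Fin n) :=
  (fun p => (a.1 p.1, a.2 p.2)) '' T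

open Classical in
/-- One transition of the automaton `M_•^{F₁,F₂}` on tableaux: on `∅` the
letter `(f,g)` produces `{(f 0, g 0)}`, on a nonempty tableau it produces
`T·(f,g)`; in both cases the cross `(0,0)` is added whenever the resulting
tableau meets the final zone `F`. -/
noncomputable def mstep {m n : ℕ} [NeZero m] [NeZero n]
    (F : Set (Fin m × Fin n)) (a : (Fin m → Fin m) × (Fin n → Fin n))
    (T : Set (Fin m × Fin n)) : Set (Fin m × Fin n) :=
  let T' := if T = ∅ then ({(a.1 0, a.2 0)} : Set (Fin m × Fin n)) else act a T
  if (T' ∩ F).Nonempty then insert ((0 : Fin m), (0 : Fin n)) T' else T'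

/-- The extended transition function `δ^w` of `M_•^{F₁,F₂}`. -/
noncomputable def mrun {m n : ℕ} [NeZero m] [NeZero n]
    (F : Set (Fin m × Fin n)) (w : List ((Fin m → Fin m) × (Fin n → Fin n)))
    (T : Set (Fin m × Fin n)) : Set (Fin m × Fin n) :=
  w.foldl (fun T a => mstep F a T) T

/-! Connectedness of a tableau under `Δ` is an invariant of the automaton, and the
initial state `∅` is vacuously connected. Singletons are connected; a coordinatewise map sends
crosses sharing a row or column to crosses sharing a row or column; and the cross
`(0,0)` is added only when some cross of the tableau lies in `F`, hence in row `0`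
or column `0`, so the new cross is linked to that one. -/

section LineConnected

variable {α β : Type*}

def SameLine (T : Set (α × β)) (p q : α × β) : Prop :=
  p ∈ T ∧ q ∈ T ∧ (p.1 = q.1 ∨ p.2 = q.2)

def IsLineConnected (T : Set (α × β)) : Prop :=
  ∀ p ∈ T, ∀ q ∈ T, Relation.EqvGen (SameLine T) p q

theorem eqvGen_sameLine_mono {T S : Set (α × β)} (h : T ⊆ S) {p q : α × β}
    (hpq : Relation.EqvGen (SameLine T) p q) : Relation.EqvGen (SameLine S) p q :=
  Relation.EqvGen.mono (fun _ _ ⟨hp, hq, hline⟩ => ⟨h hp, h hq, hline⟩) _ _ hpq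

theorem eqvGen_sameLine_image {γ δ : Type*} (f : α → γ) (g : β → δ) {T : Set (α × β)}
    {p q : α × β} (h : Relation.EqvGen (SameLine T) p q) :
    Relation.EqvGen (SameLine (Prod.map f g '' T)) (Prod.map f g p) (Prod.map f g q) := by
  induction h with
  | rel x y h =>
    obtain ⟨hx, hy, hline⟩ := h
    exact .rel _ _ ⟨Set.mem_image_of_mem _ hx, Set.mem_image_of_mem _ hy,
      hline.imp (congrArg f) (congrArg g)⟩
  | refl x => exact .refl _
  | symm x y _ ih => exact .symm _ _ ih
  | trans x y z _ _ ih₁ ih₂ => exact .trans _ _ _ ih₁ ih₂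

theorem isLineConnected_empty : IsLineConnected (∅ : Set (α × β)) :=
  fun _ hp => absurd hp (Set.notMem_empty _)

theorem isLineConnected_singleton (x : α × β) : IsLineConnected ({x} : Set (α × β)) := by
  rintro p rfl q rfl
  exact .refl _

namespace IsLineConnected

theorem image {γ δ : Type*} {T : Set (α × β)} (hT : IsLineConnected T) (f : α → γ)
    (g : β → δ) : IsLineConnected (Prod.map f g '' T) := by
  rintro _ ⟨p, hp, rfl⟩ _ ⟨q, hq, rfl⟩
  exact eqvGen_sameLine_image f g (hT p hp q hq)

theorem insert {T : Set (α × β)} (hT : IsLineConnected T) {c x : α × β} (hx : x ∈ T)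
    (hline : c.1 = x.1 ∨ c.2 = x.2) : IsLineConnected (Insert.insert c T) := by
  have hsub : T ⊆ Insert.insert c T := Set.subset_insert c T
  have hc : ∀ q ∈ T, Relation.EqvGen (SameLine (Insert.insert c T)) c q := fun q hq =>
    .trans _ x _ (.rel _ _ ⟨Set.mem_insert c T, hsub hx, hline⟩)
      (eqvGen_sameLine_mono hsub (hT x hx q hq))
  rintro p (rfl | hp) q (rfl | hq)
  · exact .refl _
  · exact hc q hq
  · exact .symm _ _ (hc p hp)
  · exact eqvGen_sameLine_mono hsub (hT p hp q hq)

variable {m n : ℕ} [NeZero m] [NeZero n] {F : Set (Fin m × Fin n)}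

theorem mstep (hF : ∀ p ∈ F, p.1 = 0 ∨ p.2 = 0) {T : Set (Fin m × Fin n)}
    (hT : IsLineConnected T) (a : (Fin m → Fin m) × (Fin n → Fin n)) :
    IsLineConnected (mstep F a T) := by
  classical
  have hT' : IsLineConnected
      (if T = ∅ then ({(a.1 0, a.2 0)} : Set (Fin m × Fin n)) else act a T) := by
    split_ifs
    · exact isLineConnected_singleton _
    · exact hT.image a.1 a.2
  simp only [_root_.mstep]
  generalize (if T = ∅ then ({(a.1 0, a.2 0)} : Set (Fin m × Fin n)) else act a T) = T'
    at hT' ⊢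
  split_ifs with hmeet
  · obtain ⟨x, hx, hxF⟩ := hmeet
    exact hT'.insert (c := (0, 0)) hx ((hF x hxF).imp Eq.symm Eq.symm)
  · exact hT'

theorem mrun (hF : ∀ p ∈ F, p.1 = 0 ∨ p.2 = 0) {T : Set (Fin m × Fin n)}
    (hT : IsLineConnected T) (w : List ((Fin m → Fin m) × (Fin n → Fin n))) :
    IsLineConnected (mrun F w T) := by
  induction w generalizing T with
  | nil => exact hT
  | cons a w ih => exact ih (hT.mstep hF a)

end IsLineConnected

end LineConnected

theorem accessible_delta_one_class_general (m n : ℕ) [NeZero m] [NeZero n]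
    (b : Bool → Bool → Bool) (F₁ : Finset (Fin m)) (F₂ : Finset (Fin n))
    (hF : ∀ p ∈ finalZone b F₁ F₂, p.1 = 0 ∨ p.2 = 0)
    (T : Set (Fin m × Fin n))
    (hacc : ∃ w, mrun (finalZone b F₁ F₂) w ∅ = T) :
    ∀ p ∈ T, ∀ q ∈ T,
      Relation.EqvGen
        (fun p q : Fin m × Fin n => p ∈ T ∧ q ∈ T ∧ (p.1 = q.1 ∨ p.2 = q.2)) p q := by
  obtain ⟨w, rfl⟩ := hacc
  exact isLineConnected_empty.mrun hF w

/-- If the final zone is contained in `([m]×{0}) ∪ ({0}×[n])`, then any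
nonempty accessible tableau `T` has a single class for the finest equivalence
relation `Δ` generated by relating crosses in a common row or column. -/
theorem accessible_delta_one_class (m n : ℕ) [NeZero m] [NeZero n]
    (b : Bool → Bool → Bool) (F₁ : Finset (Fin m)) (F₂ : Finset (Fin n))
    (hF : ∀ p ∈ finalZone b F₁ F₂, p.1 = 0 ∨ p.2 = 0)
    (T : Set (Fin m × Fin n)) (hT : T.Nonempty)
    (hacc : ∃ w, mrun (finalZone b F₁ F₂) w ∅ = T) :
    ∀ p ∈ T, ∀ q ∈ T,
      Relation.EqvGen
        (fun p q : Fin m × Fin n => p ∈ T ∧ q ∈ T ∧ (p.1 = q.1 ∨ p.2 = q.2)) p q :=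
  accessible_delta_one_class_general m n b F₁ F₂ hF T hacc
end

section
/- If the final zone F of M_•^{F₁,F₂} is contained in ([m]×{0}) ∪ ({0}×[n]), then the set of accessible states of M_•^{F₁,F₂} is strictly contained in the set of valid states. -/
/-!
Every transition ends by possibly adding the cross `(0,0)`, so every reachable tableau is valid.
For strictness, call a tableau rook-connected if any two of its cells are joined by a chain of
cells of the tableau, consecutive ones sharing a row or a column. The empty tableau, singletons
and images `T·(f,g)` of rook-connected tableaux are rook-connected, and when `F` lies in the
row and column of `(0,0)`, adding the cross is triggered by a cell sharing a row or column with
it. Hence all accessible tableaux are rook-connected, whereas the valid tableau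
`{(0,0), (1,1)}` is not.
-/

open Relation

section RookConnected

variable {α β : Type*}

def RookAdj (T : Set (α × β)) (p q : α × β) : Prop :=
  p ∈ T ∧ q ∈ T ∧ (p.1 = q.1 ∨ p.2 = q.2)

instance (T : Set (α × β)) : Std.Symm (RookAdj T) where
  symm _ _ h := ⟨h.2.1, h.1, h.2.2.imp Eq.symm Eq.symm⟩

lemma RookAdj.mono {S T : Set (α × β)} (hST : S ⊆ T) : RookAdj S ≤ RookAdj T :=
  fun _ _ h => ⟨hST h.1, hST h.2.1, h.2.2⟩

def RookConnected (T : Set (α × β)) : Prop :=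
  ∀ ⦃p⦄, p ∈ T → ∀ ⦃q⦄, q ∈ T → ReflTransGen (RookAdj T) p q

lemma rookConnected_empty : RookConnected (∅ : Set (α × β)) :=
  fun _ hp => hp.elim

lemma rookConnected_singleton (x : α × β) : RookConnected ({x} : Set (α × β)) := by
  rintro p rfl q rfl
  exact ReflTransGen.refl

lemma RookConnected.image_prodMap {α' β' : Type*} {T : Set (α × β)} (h : RookConnected T)
    (f : α → α') (g : β → β') : RookConnected (Prod.map f g '' T) := by
  rintro _ ⟨p, hp, rfl⟩ _ ⟨q, hq, rfl⟩
  refine ReflTransGen.lift (Prod.map f g) ?_ _ _ (h hp hq)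
  rintro u v ⟨hu, hv, huv⟩
  exact ⟨⟨u, hu, rfl⟩, ⟨v, hv, rfl⟩, huv.imp (congrArg f) (congrArg g)⟩

lemma RookConnected.insert_of_aligned {T : Set (α × β)} (h : RookConnected T) {x c : α × β}
    (hc : c ∈ T) (hxc : x.1 = c.1 ∨ x.2 = c.2) : RookConnected (insert x T) := by
  have lift := ReflTransGen.mono (RookAdj.mono (Set.subset_insert x T))
  have from_x : ∀ ⦃q⦄, q ∈ T → ReflTransGen (RookAdj (insert x T)) x q := fun q hq =>
    .head ⟨Set.mem_insert x T, Set.mem_insert_of_mem x hc, hxc⟩ (lift _ _ (h hc hq))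
  rintro p (rfl | hp) q (rfl | hq)
  · exact .refl
  · exact from_x hq
  · exact symm (from_x hp)
  · exact lift _ _ (h hp hq)

lemma not_rookConnected_pair {x y : α × β} (h₁ : x.1 ≠ y.1) (h₂ : x.2 ≠ y.2) :
    ¬ RookConnected ({x, y} : Set (α × β)) := by
  intro h
  have stuck : ∀ z, ReflTransGen (RookAdj {x, y}) x z → z = x := by
    intro z hz
    induction hz with
    | refl => rfl
    | tail _ hstep ih =>
      subst ih
      obtain ⟨-, rfl | rfl, hxz⟩ := hstep
      · rfl
      · exact (hxz.elim h₁ h₂).elim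
  have hyx := stuck y (h (Set.mem_insert x _) (Set.mem_insert_of_mem x rfl))
  exact h₁ (congrArg Prod.fst hyx).symm

end RookConnected

section Automaton

variable {m n : ℕ} [NeZero m] [NeZero n]

open Classical in
noncomputable def addCross (F S : Set (Fin m × Fin n)) : Set (Fin m × Fin n) :=
  if (S ∩ F).Nonempty then insert ((0 : Fin m), (0 : Fin n)) S else S

lemma mstep_eq_addCross (F : Set (Fin m × Fin n)) (a : (Fin m → Fin m) × (Fin n → Fin n))
    (T : Set (Fin m × Fin n)) :
    mstep F a T = addCross F (if T = ∅ then {(a.1 0, a.2 0)} else act a T) :=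
  rfl

lemma mrun_cons (F : Set (Fin m × Fin n)) (a : (Fin m → Fin m) × (Fin n → Fin n))
    (w : List ((Fin m → Fin m) × (Fin n → Fin n))) (T : Set (Fin m × Fin n)) :
    mrun F (a :: w) T = mrun F w (mstep F a T) :=
  rfl

def IsValid (F T : Set (Fin m × Fin n)) : Prop :=
  T ∩ F = ∅ ∨ ((0 : Fin m), (0 : Fin n)) ∈ T

lemma isValid_addCross (F S : Set (Fin m × Fin n)) : IsValid F (addCross F S) := by
  unfold addCross
  split_ifs with hmeet
  · exact Or.inr (Set.mem_insert _ _)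
  · exact Or.inl (Set.not_nonempty_iff_eq_empty.mp hmeet)

lemma isValid_mrun {F T : Set (Fin m × Fin n)} (hT : IsValid F T) :
    ∀ w, IsValid F (mrun F w T) := by
  intro w
  induction w generalizing T with
  | nil => exact hT
  | cons a w ih =>
    rw [mrun_cons, mstep_eq_addCross]
    exact ih (isValid_addCross F _)

variable {F : Set (Fin m × Fin n)}

lemma rookConnected_addCross (hF : ∀ p ∈ F, p.1 = 0 ∨ p.2 = 0) {S : Set (Fin m × Fin n)}
    (h : RookConnected S) : RookConnected (addCross F S) := by
  unfold addCross
  split_ifs with hmeet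
  · obtain ⟨c, hcS, hcF⟩ := hmeet
    exact h.insert_of_aligned hcS ((hF c hcF).imp Eq.symm Eq.symm)
  · exact h

lemma rookConnected_mrun (hF : ∀ p ∈ F, p.1 = 0 ∨ p.2 = 0) {T : Set (Fin m × Fin n)}
    (h : RookConnected T) : ∀ w, RookConnected (mrun F w T) := by
  intro w
  induction w generalizing T with
  | nil => exact h
  | cons a w ih =>
    rw [mrun_cons, mstep_eq_addCross]
    refine ih (rookConnected_addCross hF ?_)
    split_ifs
    · exact rookConnected_singleton _
    · exact h.image_prodMap a.1 a.2

end Automaton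

/-- If the final zone of `M_•^{F₁,F₂}` is contained in
`([m]×{0}) ∪ ({0}×[n])`, then the set of accessible states is strictly
contained in the set of valid states (those `T` with `T ∩ F = ∅` or
`(0,0) ∈ T`). -/
theorem accessible_ssubset_valid (m n : ℕ) (hm : 2 ≤ m) (hn : 2 ≤ n)
    [NeZero m] [NeZero n]
    (b : Bool → Bool → Bool) (F₁ : Finset (Fin m)) (F₂ : Finset (Fin n))
    (hF : ∀ p ∈ finalZone b F₁ F₂, p.1 = 0 ∨ p.2 = 0) :
    {T : Set (Fin m × Fin n) | ∃ w, mrun (finalZone b F₁ F₂) w ∅ = T} ⊂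
      {T : Set (Fin m × Fin n) |
        T ∩ finalZone b F₁ F₂ = ∅ ∨ ((0 : Fin m), (0 : Fin n)) ∈ T} := by
  have h1m : (1 : Fin m) ≠ 0 := by rw [Ne, Fin.one_eq_zero_iff]; omega
  have h1n : (1 : Fin n) ≠ 0 := by rw [Ne, Fin.one_eq_zero_iff]; omega
  refine ⟨?_, fun hsub => ?_⟩
  · rintro _ ⟨w, rfl⟩
    exact isValid_mrun (Or.inl (Set.empty_inter _)) w
  · obtain ⟨w, hw⟩ := hsub (show IsValid _ {((0 : Fin m), (0 : Fin n)), (1, 1)} from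
      Or.inr (Set.mem_insert _ _))
    exact not_rookConnected_pair h1m.symm h1n.symm
      (hw ▸ rookConnected_mrun hF rookConnected_empty w)
end

section
/- In the automaton M̂_•^{F₁,F₂}, if two tableaux T₁ and T₂ are Nerode equivalent, then T₁ is Nerode equivalent to T₁ ∪ T₂. Consequently, every Nerode class is a join semilattice under inclusion and contains a unique maximal tableau. -/
/-- The extended pure action `d^w` of the automaton `M̂_•^{F₁,F₂}`. -/
def drun {m n : ℕ} (w : List ((Fin m → Fin m) × (Fin n → Fin n)))
    (T : Set (Fin m × Fin n)) : Set (Fin m × Fin n) :=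
  w.foldl (fun T a => act a T) T

/-- Nerode equivalence in `M̂` with final zone `F`: after reading any word the
two reached tableaux are both final (meet `F`) or both non-final. -/
def NerodeHat {m n : ℕ} (F : Set (Fin m × Fin n))
    (T T' : Set (Fin m × Fin n)) : Prop :=
  ∀ w : List ((Fin m → Fin m) × (Fin n → Fin n)),
    (drun w T ∩ F).Nonempty ↔ (drun w T' ∩ F).Nonempty

lemma drun_iUnion {m n : ℕ} (w : List ((Fin m → Fin m) × (Fin n → Fin n)))
    {ι : Sort*} (S : ι → Set (Fin m × Fin n)) :
    drun w (⋃ i, S i) = ⋃ i, drun w (S i) := by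
  induction w generalizing S with
  | nil => rfl
  | cons a w ih =>
      show drun w (act a (⋃ i, S i)) = ⋃ i, drun w (act a (S i))
      rw [show act a (⋃ i, S i) = ⋃ i, act a (S i) from Set.image_iUnion, ih]

lemma drun_union {m n : ℕ} (w : List ((Fin m → Fin m) × (Fin n → Fin n)))
    (T S : Set (Fin m × Fin n)) :
    drun w (T ∪ S) = drun w T ∪ drun w S := by
  rw [Set.union_eq_iUnion, drun_iUnion, Set.union_eq_iUnion]
  exact Set.iUnion_congr (fun b => by cases b <;> rfl)

/-- In `M̂_•^{F₁,F₂}`, Nerode-equivalent tableaux `T₁ ~ T₂` satisfy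
`T₁ ~ T₁ ∪ T₂`; consequently every Nerode class is a join semilattice for
inclusion and contains a unique maximal tableau. -/
theorem nerodeHat_union (m n : ℕ) (F : Set (Fin m × Fin n)) :
    (∀ T₁ T₂ : Set (Fin m × Fin n),
      NerodeHat F T₁ T₂ → NerodeHat F T₁ (T₁ ∪ T₂)) ∧
    (∀ T : Set (Fin m × Fin n), ∃! Tmax : Set (Fin m × Fin n),
      NerodeHat F T Tmax ∧ ∀ T', NerodeHat F T T' → T' ⊆ Tmax) := by
  constructor
  · intro T₁ T₂ h w
    rw [drun_union, Set.union_inter_distrib_right, Set.union_nonempty, ← h w, or_self]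
  · intro T
    set U : Set (Fin m × Fin n) := ⋃ T' : {T' // NerodeHat F T T'}, T'.1 with hU
    have hN : NerodeHat F T U := by
      intro w
      rw [hU, drun_iUnion, Set.iUnion_inter, Set.nonempty_iUnion]
      constructor
      · intro h
        exact ⟨⟨T, fun _ => Iff.rfl⟩, h⟩
      · rintro ⟨T', h⟩
        exact (T'.2 w).mpr h
    have hmax : ∀ T', NerodeHat F T T' → T' ⊆ U := by
      intro T' h p hp
      exact Set.mem_iUnion.mpr ⟨⟨T', h⟩, hp⟩
    refine ⟨U, ⟨hN, hmax⟩, ?_⟩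
    rintro S ⟨hS, hSmax⟩
    exact Set.Subset.antisymm (hmax S hS) (hSmax U hN)
end

section
/- In M̂_•^{F₁,F₂}, if T ⊆ T' ⊆ T'' and T is Nerode equivalent to T'', then T is Nerode equivalent to T'. Each Nerode class is a union of intervals in the inclusion order on tableaux. -/
section

variable {m n : ℕ} {T T' : Set (Fin m × Fin n)}

lemma act_mono (a : (Fin m → Fin m) × (Fin n → Fin n)) (h : T ⊆ T') :
    act a T ⊆ act a T' :=
  Set.image_mono h

lemma drun_mono (w : List ((Fin m → Fin m) × (Fin n → Fin n))) (h : T ⊆ T') :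
    drun w T ⊆ drun w T' := by
  induction w generalizing T T' with
  | nil => exact h
  | cons a w ih => exact ih (act_mono a h)

lemma drun_inter_nonempty_mono (F : Set (Fin m × Fin n))
    (w : List ((Fin m → Fin m) × (Fin n → Fin n))) (h : T ⊆ T')
    (hT : (drun w T ∩ F).Nonempty) : (drun w T' ∩ F).Nonempty :=
  hT.mono (Set.inter_subset_inter_left F (drun_mono w h))

end

/-- In `M̂_•^{F₁,F₂}`, if `T ⊆ T' ⊆ T''` and `T` is Nerode equivalent to `T''`,
then `T` is Nerode equivalent to `T'`: each Nerode class is a union of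
intervals for the inclusion order. -/
theorem nerodeHat_interval (m n : ℕ) (F : Set (Fin m × Fin n))
    (T T' T'' : Set (Fin m × Fin n)) (h1 : T ⊆ T') (h2 : T' ⊆ T'')
    (h : NerodeHat F T T'') : NerodeHat F T T' := fun w =>
  ⟨drun_inter_nonempty_mono F w h1,
    fun hT' => (h w).mpr (drun_inter_nonempty_mono F w h2 hT')⟩
end

section
/- If • is a non-degenerate Boolean operation of type A (intersection-like, so the final zone F = F₁ × F₂ with ∅ ≠ F₁ ⊊ [m], ∅ ≠ F₂ ⊊ [n]), then for any tableau T ⊆ [m]×[n] and any cell (i_c, j_c) ∉ T, the tableaux T and T ∪ {(i_c,j_c)} are not Nerode equivalent in M̂_∩^{F₁,F₂}. Consequently every Nerode class of M̂_∩^{F₁,F₂} is a singleton. -/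
lemma key_word {m n : ℕ}
    (F₁ : Set (Fin m)) (F₂ : Set (Fin n))
    (hF₁ : F₁.Nonempty) (hF₁' : F₁ ≠ Set.univ)
    (hF₂ : F₂.Nonempty) (hF₂' : F₂ ≠ Set.univ)
    (c : Fin m × Fin n) :
    ∃ a : (Fin m → Fin m) × (Fin n → Fin n),
      ∀ T : Set (Fin m × Fin n), (act a T ∩ F₁ ×ˢ F₂).Nonempty ↔ c ∈ T := by
  obtain ⟨p₁, hp₁⟩ := hF₁
  obtain ⟨p₂, hp₂⟩ := hF₂
  obtain ⟨q₁, hq₁⟩ : ∃ x, x ∉ F₁ := by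
    by_contra h; push_neg at h
    exact hF₁' (Set.eq_univ_of_forall h)
  obtain ⟨q₂, hq₂⟩ : ∃ x, x ∉ F₂ := by
    by_contra h; push_neg at h
    exact hF₂' (Set.eq_univ_of_forall h)
  refine ⟨(fun i => if i = c.1 then p₁ else q₁, fun j => if j = c.2 then p₂ else q₂),
    fun T => ⟨?_, ?_⟩⟩
  · rintro ⟨x, ⟨⟨i, j⟩, hij, rfl⟩, hx1, hx2⟩
    simp only at hx1 hx2
    by_cases hi : i = c.1
    · by_cases hj : j = c.2
      · subst hi; subst hj; exact hij
      · simp [hj] at hx2; exact absurd hx2 hq₂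
    · simp [hi] at hx1; exact absurd hx1 hq₁
  · intro hc
    exact ⟨(p₁, p₂), ⟨c, hc, by simp⟩, hp₁, hp₂⟩

/-- Type A (intersection-like) case: with final zone `F = F₁ ×ˢ F₂` for
non-degenerate `F₁`, `F₂`, adding any missing cross to a tableau changes its
Nerode class in `M̂_∩^{F₁,F₂}`; consequently every Nerode class is a
singleton. -/
theorem nerodeHat_inter_singleton_classes (m n : ℕ)
    (F₁ : Set (Fin m)) (F₂ : Set (Fin n))
    (hF₁ : F₁.Nonempty) (hF₁' : F₁ ≠ Set.univ)
    (hF₂ : F₂.Nonempty) (hF₂' : F₂ ≠ Set.univ) :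
    (∀ (T : Set (Fin m × Fin n)) (c : Fin m × Fin n), c ∉ T →
      ¬ NerodeHat (F₁ ×ˢ F₂) T (insert c T)) ∧
    (∀ T T' : Set (Fin m × Fin n), NerodeHat (F₁ ×ˢ F₂) T T' → T = T') := by
  have main : ∀ T T' : Set (Fin m × Fin n), NerodeHat (F₁ ×ˢ F₂) T T' → T = T' := by
    intro T T' h
    ext c
    obtain ⟨a, ha⟩ := key_word F₁ F₂ hF₁ hF₁' hF₂ hF₂' c
    have := h [a]
    simp only [drun, List.foldl] at this
    rw [ha T, ha T'] at this
    exact this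
  refine ⟨fun T c hc hN => hc ?_, main⟩
  have := main T (insert c T) hN
  rw [this]; exact Set.mem_insert c T
end

section
/- For the type-O (union) case, a tableau T ⊆ [m]×[n] is saturated in M̂_∪^{F₁,F₂} (with non-degenerate ∅ ≠ F₁ ⊊ [m], ∅ ≠ F₂ ⊊ [n]) if and only if T is a combinatorial rectangle, i.e., T = A × B for some A ⊆ [m] and B ⊆ [n]. -/
lemma fst_act {m n : ℕ} (a : (Fin m → Fin m) × (Fin n → Fin n))
    (T : Set (Fin m × Fin n)) :
    Prod.fst '' (act a T) = a.1 '' (Prod.fst '' T) := by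
  simp [act, Set.image_image]

lemma snd_act {m n : ℕ} (a : (Fin m → Fin m) × (Fin n → Fin n))
    (T : Set (Fin m × Fin n)) :
    Prod.snd '' (act a T) = a.2 '' (Prod.snd '' T) := by
  simp [act, Set.image_image]

lemma proj_drun {m n : ℕ} (w : List ((Fin m → Fin m) × (Fin n → Fin n)))
    (T T' : Set (Fin m × Fin n))
    (h1 : Prod.fst '' T = Prod.fst '' T')
    (h2 : Prod.snd '' T = Prod.snd '' T') :
    Prod.fst '' (drun w T) = Prod.fst '' (drun w T') ∧
    Prod.snd '' (drun w T) = Prod.snd '' (drun w T') := by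
  induction w generalizing T T' with
  | nil => exact ⟨h1, h2⟩
  | cons a w ih =>
      have e1 : Prod.fst '' (act a T) = Prod.fst '' (act a T') := by
        rw [fst_act, fst_act, h1]
      have e2 : Prod.snd '' (act a T) = Prod.snd '' (act a T') := by
        rw [snd_act, snd_act, h2]
      exact ih (act a T) (act a T') e1 e2

lemma inter_F_nonempty {m n : ℕ} (F₁ : Set (Fin m)) (F₂ : Set (Fin n))
    (X : Set (Fin m × Fin n)) :
    (X ∩ ((F₁ ×ˢ (Set.univ : Set (Fin n))) ∪
        ((Set.univ : Set (Fin m)) ×ˢ F₂))).Nonempty ↔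
      (Prod.fst '' X ∩ F₁).Nonempty ∨ (Prod.snd '' X ∩ F₂).Nonempty := by
  constructor
  · rintro ⟨⟨i, j⟩, hx, h | h⟩
    · exact Or.inl ⟨i, ⟨⟨(i, j), hx, rfl⟩, h.1⟩⟩
    · exact Or.inr ⟨j, ⟨⟨(i, j), hx, rfl⟩, h.2⟩⟩
  · rintro (⟨i, ⟨⟨p, hp, rfl⟩, hi⟩⟩ | ⟨j, ⟨⟨p, hp, rfl⟩, hj⟩⟩)
    · exact ⟨p, hp, Or.inl ⟨hi, trivial⟩⟩
    · exact ⟨p, hp, Or.inr ⟨trivial, hj⟩⟩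

lemma nerode_of_proj {m n : ℕ} (F₁ : Set (Fin m)) (F₂ : Set (Fin n))
    (T T' : Set (Fin m × Fin n))
    (h1 : Prod.fst '' T = Prod.fst '' T')
    (h2 : Prod.snd '' T = Prod.snd '' T') :
    NerodeHat ((F₁ ×ˢ (Set.univ : Set (Fin n))) ∪
        ((Set.univ : Set (Fin m)) ×ˢ F₂)) T T' := by
  intro w
  obtain ⟨e1, e2⟩ := proj_drun w T T' h1 h2
  rw [inter_F_nonempty, inter_F_nonempty, e1, e2]

lemma proj_of_nerode {m n : ℕ} (F₁ : Set (Fin m)) (F₂ : Set (Fin n))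
    (hF₁ : F₁.Nonempty) (hF₁' : F₁ ≠ Set.univ)
    (hF₂ : F₂.Nonempty) (hF₂' : F₂ ≠ Set.univ)
    (T T' : Set (Fin m × Fin n))
    (h : NerodeHat ((F₁ ×ˢ (Set.univ : Set (Fin n))) ∪
        ((Set.univ : Set (Fin m)) ×ˢ F₂)) T T') :
    Prod.fst '' T = Prod.fst '' T' ∧ Prod.snd '' T = Prod.snd '' T' := by
  obtain ⟨a, ha⟩ := hF₁
  obtain ⟨b, hb⟩ : ∃ b, b ∉ F₁ := by
    by_contra hc
    push_neg at hc
    exact hF₁' (Set.eq_univ_of_forall hc)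
  obtain ⟨c, hc⟩ := hF₂
  obtain ⟨d, hd⟩ : ∃ d, d ∉ F₂ := by
    by_contra hcon
    push_neg at hcon
    exact hF₂' (Set.eq_univ_of_forall hcon)
  constructor
  · ext i₀
    have key : ∀ X : Set (Fin m × Fin n),
        (drun [((fun i => if i = i₀ then a else b), (fun _ => d))] X ∩
          ((F₁ ×ˢ (Set.univ : Set (Fin n))) ∪
            ((Set.univ : Set (Fin m)) ×ˢ F₂))).Nonempty ↔ i₀ ∈ Prod.fst '' X := by
      intro X
      rw [inter_F_nonempty]
      simp only [drun, List.foldl, fst_act, snd_act]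
      constructor
      · rintro (⟨i, ⟨⟨i', hi', rfl⟩, hiF⟩⟩ | ⟨j, ⟨⟨j', hj', rfl⟩, hjF⟩⟩)
        · by_cases hii : i' = i₀
          · rw [hii] at hi'; exact hi'
          · simp only [hii, if_false] at hiF; exact absurd hiF hb
        · exact absurd hjF hd
      · intro hi
        exact Or.inl ⟨a, ⟨⟨i₀, hi, by simp⟩, ha⟩⟩
    constructor
    · intro hi
      exact (key T').mp ((h _).mp ((key T).mpr hi))
    · intro hi
      exact (key T).mp ((h _).mpr ((key T').mpr hi))
  · ext j₀
    have key : ∀ X : Set (Fin m × Fin n),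
        (drun [((fun _ => b), (fun j => if j = j₀ then c else d))] X ∩
          ((F₁ ×ˢ (Set.univ : Set (Fin n))) ∪
            ((Set.univ : Set (Fin m)) ×ˢ F₂))).Nonempty ↔ j₀ ∈ Prod.snd '' X := by
      intro X
      rw [inter_F_nonempty]
      simp only [drun, List.foldl, fst_act, snd_act]
      constructor
      · rintro (⟨i, ⟨⟨i', hi', rfl⟩, hiF⟩⟩ | ⟨j, ⟨⟨j', hj', rfl⟩, hjF⟩⟩)
        · exact absurd hiF hb
        · by_cases hjj : j' = j₀
          · rw [hjj] at hj'; exact hj'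
          · simp only [hjj, if_false] at hjF; exact absurd hjF hd
      · intro hj
        exact Or.inr ⟨c, ⟨⟨j₀, hj, by simp⟩, hc⟩⟩
    constructor
    · intro hj
      exact (key T').mp ((h _).mp ((key T).mpr hj))
    · intro hj
      exact (key T).mp ((h _).mpr ((key T').mpr hj))

/-- Type O (union) case: with final zone `F = (F₁×[n]) ∪ ([m]×F₂)` for
non-degenerate `F₁`, `F₂`, a tableau is saturated in `M̂_∪^{F₁,F₂}` (the unique
maximal element of its Nerode class) if and only if it is a combinatorial
rectangle `A × B`. -/
theorem saturated_iff_rectangle (m n : ℕ)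
    (F₁ : Set (Fin m)) (F₂ : Set (Fin n))
    (hF₁ : F₁.Nonempty) (hF₁' : F₁ ≠ Set.univ)
    (hF₂ : F₂.Nonempty) (hF₂' : F₂ ≠ Set.univ)
    (T : Set (Fin m × Fin n)) :
    (∀ T', NerodeHat ((F₁ ×ˢ (Set.univ : Set (Fin n))) ∪
        ((Set.univ : Set (Fin m)) ×ˢ F₂)) T T' → T' ⊆ T) ↔
      ∃ (A : Set (Fin m)) (B : Set (Fin n)), T = A ×ˢ B := by
  constructor
  · intro hsat
    rcases T.eq_empty_or_nonempty with hT | hT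
    · exact ⟨∅, ∅, by simp [hT]⟩
    · refine ⟨Prod.fst '' T, Prod.snd '' T, ?_⟩
      have hA : (Prod.fst '' T).Nonempty := hT.image _
      have hB : (Prod.snd '' T).Nonempty := hT.image _
      have h1 : Prod.fst '' T = Prod.fst '' ((Prod.fst '' T) ×ˢ (Prod.snd '' T)) := by
        rw [Set.fst_image_prod _ hB]
      have h2 : Prod.snd '' T = Prod.snd '' ((Prod.fst '' T) ×ˢ (Prod.snd '' T)) := by
        rw [Set.snd_image_prod hA]
      have hsub := hsat _ (nerode_of_proj F₁ F₂ _ _ h1 h2)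
      apply Set.Subset.antisymm
      · intro p hp
        exact ⟨⟨p, hp, rfl⟩, ⟨p, hp, rfl⟩⟩
      · exact hsub
  · rintro ⟨A, B, rfl⟩ T' hN
    obtain ⟨h1, h2⟩ := proj_of_nerode F₁ F₂ hF₁ hF₁' hF₂ hF₂' _ _ hN
    intro p hp
    have hpA : p.1 ∈ A := by
      have : p.1 ∈ Prod.fst '' T' := ⟨p, hp, rfl⟩
      rw [← h1] at this
      exact Set.fst_image_prod_subset A B this
    have hpB : p.2 ∈ B := by
      have : p.2 ∈ Prod.snd '' T' := ⟨p, hp, rfl⟩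
      rw [← h2] at this
      exact Set.snd_image_prod_subset A B this
    exact ⟨hpA, hpB⟩
end

section
/- For a tableau T ⊆ [m]×[n], writing row_i(T) = {j | (i,j) ∈ T}, the following are equivalent: (1) T is locally saturated (contains no 2×2 pattern on rows i₁ ≠ i₂ and columns j₁ ≠ j₂ with exactly three of the four cells present); (2) for any i₁, i₂ ∈ [m], either row_{i₁}(T) = row_{i₂}(T) or row_{i₁}(T) ∩ row_{i₂}(T) = ∅; (3) the same condition for columns col_j(T) = {i | (i,j) ∈ T}. -/
/-- A tableau is locally saturated if it contains no 2×2 pattern (on two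
distinct rows and two distinct columns) with exactly three of the four cells
present. -/
def LocSat {m n : ℕ} (T : Set (Fin m × Fin n)) : Prop :=
  ∀ (i₁ i₂ : Fin m) (j₁ j₂ : Fin n), i₁ ≠ i₂ → j₁ ≠ j₂ →
    ¬(((i₁, j₁) ∈ T ∧ (i₁, j₂) ∈ T ∧ (i₂, j₁) ∈ T ∧ (i₂, j₂) ∉ T) ∨
      ((i₁, j₁) ∈ T ∧ (i₁, j₂) ∈ T ∧ (i₂, j₁) ∉ T ∧ (i₂, j₂) ∈ T) ∨
      ((i₁, j₁) ∈ T ∧ (i₁, j₂) ∉ T ∧ (i₂, j₁) ∈ T ∧ (i₂, j₂) ∈ T) ∨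
      ((i₁, j₁) ∉ T ∧ (i₁, j₂) ∈ T ∧ (i₂, j₁) ∈ T ∧ (i₂, j₂) ∈ T))

/-- The set of column indices of the crosses in row `i` of `T`. -/
def rowSet {m n : ℕ} (T : Set (Fin m × Fin n)) (i : Fin m) : Set (Fin n) :=
  {j | (i, j) ∈ T}

/-- The set of row indices of the crosses in column `j` of `T`. -/
def colSet {m n : ℕ} (T : Set (Fin m × Fin n)) (j : Fin n) : Set (Fin m) :=
  {i | (i, j) ∈ T}


lemma locSat_rows {m n : ℕ} (T : Set (Fin m × Fin n)) :
    LocSat T ↔ ∀ i₁ i₂ : Fin m,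
      rowSet T i₁ = rowSet T i₂ ∨ rowSet T i₁ ∩ rowSet T i₂ = ∅ := by
  constructor
  · intro h i₁ i₂
    by_cases hi : i₁ = i₂
    · left; rw [hi]
    rcases Set.eq_empty_or_nonempty (rowSet T i₁ ∩ rowSet T i₂) with he | ⟨j₀, hj₀⟩
    · right; exact he
    left
    obtain ⟨h1, h2⟩ := hj₀
    ext j
    constructor
    · intro hj
      by_cases hjj : j = j₀
      · subst hjj; exact h2
      by_contra hj2
      exact h i₁ i₂ j j₀ hi hjj (Or.inr (Or.inl ⟨hj, h1, hj2, h2⟩))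
    · intro hj
      by_cases hjj : j = j₀
      · subst hjj; exact h1
      by_contra hj1
      exact h i₁ i₂ j j₀ hi hjj (Or.inr (Or.inr (Or.inr ⟨hj1, h1, hj, h2⟩)))
  · intro h i₁ i₂ j₁ j₂ hi hj hbad
    rcases h i₁ i₂ with he | hd
    · have e1 : ((i₁, j₁) ∈ T) ↔ ((i₂, j₁) ∈ T) := Set.ext_iff.1 he j₁
      have e2 : ((i₁, j₂) ∈ T) ↔ ((i₂, j₂) ∈ T) := Set.ext_iff.1 he j₂
      tauto
    · have d1 : ¬((i₁, j₁) ∈ T ∧ (i₂, j₁) ∈ T) := by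
        intro ⟨a, b⟩
        exact Set.eq_empty_iff_forall_notMem.1 hd j₁ ⟨a, b⟩
      have d2 : ¬((i₁, j₂) ∈ T ∧ (i₂, j₂) ∈ T) := by
        intro ⟨a, b⟩
        exact Set.eq_empty_iff_forall_notMem.1 hd j₂ ⟨a, b⟩
      tauto

lemma locSat_swap {m n : ℕ} (T : Set (Fin m × Fin n)) :
    LocSat T ↔ LocSat (Prod.swap ⁻¹' T : Set (Fin n × Fin m)) := by
  constructor
  · intro h j₁ j₂ i₁ i₂ hj hi hbad
    have := h i₁ i₂ j₁ j₂ hi hj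
    simp only [Set.mem_preimage, Prod.swap_prod_mk] at hbad
    tauto
  · intro h i₁ i₂ j₁ j₂ hi hj hbad
    have := h j₁ j₂ i₁ i₂ hj hi
    simp only [Set.mem_preimage, Prod.swap_prod_mk] at this
    tauto

/-- A tableau is locally saturated iff any two of its rows are equal or
disjoint, iff any two of its columns are equal or disjoint. -/
theorem locSat_iff_rows_iff_cols {m n : ℕ} (T : Set (Fin m × Fin n)) :
    (LocSat T ↔ ∀ i₁ i₂ : Fin m,
      rowSet T i₁ = rowSet T i₂ ∨ rowSet T i₁ ∩ rowSet T i₂ = ∅) ∧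
    (LocSat T ↔ ∀ j₁ j₂ : Fin n,
      colSet T j₁ = colSet T j₂ ∨ colSet T j₁ ∩ colSet T j₂ = ∅) := by
  have hcol : ∀ j : Fin n, colSet T j = rowSet (Prod.swap ⁻¹' T : Set (Fin n × Fin m)) j := by
    intro j; ext i; rfl
  refine ⟨locSat_rows T, ?_⟩
  rw [locSat_swap, locSat_rows]
  simp only [hcol]
end

section
/- For the type-O (union) case with m, n ≥ 2 and final zone F = (F₁×[n]) ∪ ([m]×F₂) containing (0,0) (so 0 ∈ F₁ or 0 ∈ F₂), with #F₁ = p and #F₂ = q: the number of rectangles A×B (A ⊆ [m], B ⊆ [n]) that are valid—meaning (A×B) ∩ F = ∅ or (0,0) ∈ A×B—equals 2^{m+n−2} + (2^{m−p} − 1)(2^{n−q} − 1) + 1. -/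
open Finset

lemma card_filter_mem_aux {α : Type*} [Fintype α] [DecidableEq α] (a : α) :
    (Finset.univ.filter (fun A : Finset α => a ∈ A)).card = 2 ^ (Fintype.card α - 1) := by
  have h1 : (Finset.univ.filter (fun A : Finset α => ¬ a ∈ A))
      = (Finset.univ.erase a).powerset := by
    ext A
    simp [Finset.subset_erase]
  have h2 := Finset.card_filter_add_card_filter_not
    (s := (Finset.univ : Finset (Finset α))) (p := fun A => a ∈ A)
  rw [h1] at h2
  have h3 : ((Finset.univ.erase a).powerset).card = 2 ^ (Fintype.card α - 1) := by
    rw [Finset.card_powerset, Finset.card_erase_of_mem (Finset.mem_univ a),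
      Finset.card_univ]
  have h4 : (Finset.univ : Finset (Finset α)).card = 2 ^ Fintype.card α := by
    simp [Finset.card_univ, Fintype.card_finset]
  have hc : 1 ≤ Fintype.card α := Fintype.card_pos_iff.mpr ⟨a⟩
  have hpow : 2 ^ Fintype.card α = 2 ^ (Fintype.card α - 1) * 2 := by
    rw [← pow_succ]
    congr 1
    omega
  omega

/-- Type O (union) count of valid rectangles: with `m, n ≥ 2`, final zone
`F = (F₁×[n]) ∪ ([m]×F₂)` containing `(0,0)`, `#F₁ = p`, `#F₂ = q`, the number
of tableaux that are rectangles `A × B` and valid (disjoint from `F` or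
containing `(0,0)`) equals `2^(m+n-2) + (2^(m-p)-1)(2^(n-q)-1) + 1`. -/
theorem card_valid_rectangles_typeO (m n p q : ℕ) (hm : 2 ≤ m) (hn : 2 ≤ n)
    (F₁ : Finset (Fin m)) (F₂ : Finset (Fin n))
    (hp : F₁.card = p) (hq : F₂.card = q)
    (h0 : (⟨0, by omega⟩ : Fin m) ∈ F₁ ∨ (⟨0, by omega⟩ : Fin n) ∈ F₂) :
    (Finset.univ.filter (fun T : Finset (Fin m × Fin n) =>
        (∃ (A : Finset (Fin m)) (B : Finset (Fin n)), T = A ×ˢ B) ∧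
        (T ∩ (F₁ ×ˢ (Finset.univ : Finset (Fin n)) ∪
            (Finset.univ : Finset (Fin m)) ×ˢ F₂) = ∅ ∨
          ((⟨0, by omega⟩ : Fin m), (⟨0, by omega⟩ : Fin n)) ∈ T))).card
      = 2 ^ (m + n - 2) + (2 ^ (m - p) - 1) * (2 ^ (n - q) - 1) + 1 := by
  classical
  subst hp hq
  set z₁ : Fin m := ⟨0, by omega⟩ with hz₁
  set z₂ : Fin n := ⟨0, by omega⟩ with hz₂
  set F : Finset (Fin m × Fin n) :=
    F₁ ×ˢ (Finset.univ : Finset (Fin n)) ∪ (Finset.univ : Finset (Fin m)) ×ˢ F₂ with hF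
  have hzF : (z₁, z₂) ∈ F := by
    rcases h0 with h | h
    · exact Finset.mem_union_left _ (Finset.mem_product.mpr ⟨h, Finset.mem_univ _⟩)
    · exact Finset.mem_union_right _ (Finset.mem_product.mpr ⟨Finset.mem_univ _, h⟩)
  set P₁ : Finset (Finset (Fin m) × Finset (Fin n)) :=
    (Finset.univ.filter (fun A => z₁ ∈ A)) ×ˢ (Finset.univ.filter (fun B => z₂ ∈ B)) with hP₁
  set P₂ : Finset (Finset (Fin m) × Finset (Fin n)) :=
    (F₁ᶜ.powerset.erase ∅) ×ˢ (F₂ᶜ.powerset.erase ∅) with hP₂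
  -- every pair in P₁ ∪ P₂ has both components nonempty
  have hne : ∀ x ∈ P₁ ∪ P₂, x.1.Nonempty ∧ x.2.Nonempty := by
    rintro ⟨A, B⟩ hx
    rcases Finset.mem_union.mp hx with h | h
    · rw [hP₁, Finset.mem_product] at h
      simp only [Finset.mem_filter] at h
      exact ⟨⟨z₁, h.1.2⟩, ⟨z₂, h.2.2⟩⟩
    · rw [hP₂, Finset.mem_product, Finset.mem_erase, Finset.mem_erase] at h
      exact ⟨Finset.nonempty_iff_ne_empty.mpr h.1.1, Finset.nonempty_iff_ne_empty.mpr h.2.1⟩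
  -- the set in question equals insert ∅ of the image of P₁ ∪ P₂
  have hset : (Finset.univ.filter (fun T : Finset (Fin m × Fin n) =>
        (∃ (A : Finset (Fin m)) (B : Finset (Fin n)), T = A ×ˢ B) ∧
        (T ∩ F = ∅ ∨ (z₁, z₂) ∈ T)))
      = insert ∅ ((P₁ ∪ P₂).image (fun x => x.1 ×ˢ x.2)) := by
    ext T
    simp only [Finset.mem_filter, Finset.mem_univ, true_and, Finset.mem_insert,
      Finset.mem_image]
    constructor
    · rintro ⟨⟨A, B, rfl⟩, hv⟩
      by_cases hA : A = ∅
      · subst hA; left; simp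
      by_cases hB : B = ∅
      · subst hB; left; simp
      right
      rcases hv with hd | hz
      · refine ⟨(A, B), Finset.mem_union.mpr (Or.inr ?_), rfl⟩
        rw [hP₂, Finset.mem_product, Finset.mem_erase, Finset.mem_erase]
        obtain ⟨b, hb⟩ := Finset.nonempty_iff_ne_empty.mpr hB
        obtain ⟨a, ha⟩ := Finset.nonempty_iff_ne_empty.mpr hA
        refine ⟨⟨hA, Finset.mem_powerset.mpr fun x hx => ?_⟩,
          ⟨hB, Finset.mem_powerset.mpr fun y hy => ?_⟩⟩
        · rw [Finset.mem_compl]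
          intro hxF
          have : (x, b) ∈ (A ×ˢ B) ∩ F := by
            refine Finset.mem_inter.mpr ⟨Finset.mem_product.mpr ⟨hx, hb⟩, ?_⟩
            exact Finset.mem_union_left _ (Finset.mem_product.mpr ⟨hxF, Finset.mem_univ _⟩)
          rw [hd] at this
          exact absurd this (Finset.notMem_empty _)
        · rw [Finset.mem_compl]
          intro hyF
          have : (a, y) ∈ (A ×ˢ B) ∩ F := by
            refine Finset.mem_inter.mpr ⟨Finset.mem_product.mpr ⟨ha, hy⟩, ?_⟩
            exact Finset.mem_union_right _ (Finset.mem_product.mpr ⟨Finset.mem_univ _, hyF⟩)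
          rw [hd] at this
          exact absurd this (Finset.notMem_empty _)
      · refine ⟨(A, B), Finset.mem_union.mpr (Or.inl ?_), rfl⟩
        rw [hP₁, Finset.mem_product]
        obtain ⟨h1, h2⟩ := Finset.mem_product.mp hz
        simp only [Finset.mem_filter, Finset.mem_univ, true_and]
        exact ⟨h1, h2⟩
    · rintro (rfl | ⟨⟨A, B⟩, hx, rfl⟩)
      · exact ⟨⟨∅, ∅, by simp⟩, Or.inl (by simp)⟩
      refine ⟨⟨A, B, rfl⟩, ?_⟩
      rcases Finset.mem_union.mp hx with h | h
      · rw [hP₁, Finset.mem_product] at h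
        simp only [Finset.mem_filter] at h
        exact Or.inr (Finset.mem_product.mpr ⟨h.1.2, h.2.2⟩)
      · rw [hP₂, Finset.mem_product, Finset.mem_erase, Finset.mem_erase] at h
        left
        ext ⟨x, y⟩
        simp only [Finset.mem_inter, Finset.mem_product, Finset.notMem_empty, iff_false,
          not_and]
        rintro ⟨hxA, hyB⟩ hF'
        rcases Finset.mem_union.mp hF' with h' | h'
        · have : x ∈ F₁ᶜ := Finset.mem_powerset.mp h.1.2 hxA
          rw [Finset.mem_compl] at this
          exact this (Finset.mem_product.mp h').1
        · have : y ∈ F₂ᶜ := Finset.mem_powerset.mp h.2.2 hyB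
          rw [Finset.mem_compl] at this
          exact this (Finset.mem_product.mp h').2
  rw [hset]
  -- injectivity of the product map on nonempty pairs
  have hinj : Set.InjOn (fun x : Finset (Fin m) × Finset (Fin n) => x.1 ×ˢ x.2)
      ↑(P₁ ∪ P₂) := by
    rintro ⟨A₁, B₁⟩ h₁ ⟨A₂, B₂⟩ h₂ heq
    obtain ⟨hA₁, hB₁⟩ := hne _ h₁
    obtain ⟨hA₂, hB₂⟩ := hne _ h₂
    simp only at heq
    obtain ⟨a₁, ha₁⟩ := hA₁; obtain ⟨b₁, hb₁⟩ := hB₁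
    obtain ⟨a₂, ha₂⟩ := hA₂; obtain ⟨b₂, hb₂⟩ := hB₂
    have hA : A₁ = A₂ := by
      ext x
      constructor
      · intro hx
        have := heq ▸ (Finset.mem_product.mpr ⟨hx, hb₁⟩ : (x, b₁) ∈ A₁ ×ˢ B₁)
        exact (Finset.mem_product.mp this).1
      · intro hx
        have := heq ▸ (Finset.mem_product.mpr ⟨hx, hb₂⟩ : (x, b₂) ∈ A₂ ×ˢ B₂)
        exact (Finset.mem_product.mp this).1
    have hB : B₁ = B₂ := by
      ext y
      constructor
      · intro hy
        have := heq ▸ (Finset.mem_product.mpr ⟨ha₁, hy⟩ : (a₁, y) ∈ A₁ ×ˢ B₁)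
        exact (Finset.mem_product.mp this).2
      · intro hy
        have := heq ▸ (Finset.mem_product.mpr ⟨ha₂, hy⟩ : (a₂, y) ∈ A₂ ×ˢ B₂)
        exact (Finset.mem_product.mp this).2
    simp [hA, hB]
  have hempty : (∅ : Finset (Fin m × Fin n)) ∉ (P₁ ∪ P₂).image (fun x => x.1 ×ˢ x.2) := by
    rw [Finset.mem_image]
    rintro ⟨⟨A, B⟩, hx, hAB⟩
    obtain ⟨hA, hB⟩ := hne _ hx
    have : (A ×ˢ B).Nonempty := hA.product hB
    rw [hAB] at this
    exact Finset.not_nonempty_empty this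
  rw [Finset.card_insert_of_notMem hempty, Finset.card_image_of_injOn hinj]
  have hdisj : Disjoint P₁ P₂ := by
    rw [Finset.disjoint_left]
    rintro ⟨A, B⟩ h₁ h₂
    rw [hP₁, Finset.mem_product] at h₁
    rw [hP₂, Finset.mem_product, Finset.mem_erase, Finset.mem_erase] at h₂
    simp only [Finset.mem_filter] at h₁
    rcases h0 with h | h
    · have : z₁ ∈ F₁ᶜ := Finset.mem_powerset.mp h₂.1.2 h₁.1.2
      rw [Finset.mem_compl] at this
      exact this h
    · have : z₂ ∈ F₂ᶜ := Finset.mem_powerset.mp h₂.2.2 h₁.2.2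
      rw [Finset.mem_compl] at this
      exact this h
  rw [Finset.card_union_of_disjoint hdisj]
  have hc₁ : P₁.card = 2 ^ (m + n - 2) := by
    rw [hP₁, Finset.card_product, card_filter_mem_aux, card_filter_mem_aux,
      Fintype.card_fin, Fintype.card_fin, ← pow_add]
    congr 1
    omega
  have hc₂ : P₂.card = (2 ^ (m - F₁.card) - 1) * (2 ^ (n - F₂.card) - 1) := by
    rw [hP₂, Finset.card_product, Finset.card_erase_of_mem (Finset.empty_mem_powerset _),
      Finset.card_erase_of_mem (Finset.empty_mem_powerset _),
      Finset.card_powerset, Finset.card_powerset, Finset.card_compl, Finset.card_compl,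
      Fintype.card_fin, Fintype.card_fin]
  rw [hc₁, hc₂]
end

section
/- For m = 1 and n > 1, with final zone F = {(0,f)} for some f ∈ [n], f ≠ 0, in the star-of-Boolean-operation construction: the set of valid tableaux T ⊆ {0}×[n] (those containing (0,0), or containing neither (0,0) nor (0,f)) has exactly 2^{n−1} + 2^{n−2} = (3/4)·2^n elements, all valid tableaux are accessible, and they are pairwise Nerode-inequivalent; hence the state complexity in this case is (3/4)·2^n. -/
/-- The state complexity of a language: the least number of states of a complete
DFA (with state set `Fin k`) recognizing it. -/
noncomputable def scLanguage {α : Type} (L : Language α) : ℕ :=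
  sInf {k : ℕ | ∃ M : DFA α (Fin k), M.accepts = L}

/-- One transition of the `m = 1` star-of-Boolean-operation construction with
final zone `{f}`: from `∅` the letter `g` produces `{g 0}`, otherwise the image
of `T` by `g`; the state `0` is added whenever the result contains `f`. -/
def step19 {n : ℕ} [NeZero n] (f : Fin n) (g : Fin n → Fin n)
    (T : Finset (Fin n)) : Finset (Fin n) :=
  let T' := if T = ∅ then {g 0} else T.image g
  if f ∈ T' then insert 0 T' else T'

/-- The extended transition function of the construction. -/
def run19 {n : ℕ} [NeZero n] (f : Fin n) (w : List (Fin n → Fin n))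
    (T : Finset (Fin n)) : Finset (Fin n) :=
  w.foldl (fun T g => step19 f g T) T

/-- Final states: the empty tableau and those containing `f`. -/
def isFinal19 {n : ℕ} (f : Fin n) (T : Finset (Fin n)) : Prop :=
  T = ∅ ∨ f ∈ T

/-- A tableau is valid if it contains `0`, or contains neither `0` nor `f`. -/
def valid19 {n : ℕ} [NeZero n] (f : Fin n) (T : Finset (Fin n)) : Prop :=
  (0 : Fin n) ∈ T ∨ ((0 : Fin n) ∉ T ∧ f ∉ T)

open Finset

variable {n : ℕ} [NeZero n] {f : Fin n}

abbrev valid19' (f : Fin n) (T : Finset (Fin n)) : Prop :=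
  (0 : Fin n) ∈ T ∨ ((0 : Fin n) ∉ T ∧ f ∉ T)

def step19' (f : Fin n) (g : Fin n → Fin n) (T : Finset (Fin n)) : Finset (Fin n) :=
  let T' := if T = ∅ then {g 0} else T.image g
  if f ∈ T' then insert 0 T' else T'

lemma valid_iff (T : Finset (Fin n)) : valid19' f T ↔ (f ∈ T → 0 ∈ T) := by
  unfold valid19'; by_cases h0 : (0:Fin n) ∈ T <;> by_cases hF : f ∈ T <;> simp [h0, hF]

lemma step_valid (g : Fin n → Fin n) (T : Finset (Fin n)) :
    valid19' f (step19' f g T) := by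
  rw [valid_iff]
  by_cases h : f ∈ (if T = ∅ then ({g 0} : Finset (Fin n)) else T.image g) <;>
    simp [step19', h]

lemma step_of_ne (g : Fin n → Fin n) {T : Finset (Fin n)} (hT : T ≠ ∅)
    (hf : f ∉ T.image g) : step19' f g T = T.image g := by
  simp [step19', hT, hf]

lemma step_of_mem (g : Fin n → Fin n) {T : Finset (Fin n)} (hT : T ≠ ∅)
    (hf : f ∈ T.image g) : step19' f g T = insert 0 (T.image g) := by
  simp [step19', hT, hf]

lemma step_empty' (g : Fin n → Fin n) (h : g 0 ≠ f) :
    step19' f g (∅ : Finset (Fin n)) = {g 0} := by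
  have h' : ¬ (f = g 0) := fun hh => h hh.symm
  simp [step19', h']

lemma step_empty_f (g : Fin n → Fin n) (h : g 0 = f) :
    step19' f g (∅ : Finset (Fin n)) = {0, f} := by
  simp [step19', h]

def run19' (f : Fin n) (w : List (Fin n → Fin n)) (T : Finset (Fin n)) : Finset (Fin n) :=
  w.foldl (fun T g => step19' f g T) T

lemma run_append (w w' : List (Fin n → Fin n)) (T : Finset (Fin n)) :
    run19' f (w ++ w') T = run19' f w' (run19' f w T) :=
  List.foldl_append ..

lemma run_singleton (g : Fin n → Fin n) (T : Finset (Fin n)) :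
    run19' f [g] T = step19' f g T := rfl

lemma reach_zf (hf : f ≠ 0) :
    ∀ T : Finset (Fin n), 0 ∈ T → f ∈ T → ∃ w, run19' f w ∅ = T := by
  intro T
  induction T using Finset.strongInduction with
  | _ T ih =>
    intro h0 hF
    by_cases hTf : T = {0, f}
    · exact ⟨[fun _ => f], by rw [run_singleton, hTf]; exact step_empty_f _ rfl⟩
    · have hsub : ({0, f} : Finset (Fin n)) ⊆ T := by
        intro y hy; simp at hy; rcases hy with rfl | rfl <;> assumption
      obtain ⟨x, hxT, hx⟩ : ∃ x ∈ T, x ∉ ({0, f} : Finset (Fin n)) := by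
        by_contra hc
        push_neg at hc
        exact hTf (Finset.Subset.antisymm hc hsub)
      simp only [Finset.mem_insert, Finset.mem_singleton, not_or] at hx
      obtain ⟨hx0, hxf⟩ := hx
      obtain ⟨w, hw⟩ := ih (T.erase x) (Finset.erase_ssubset hxT)
        (Finset.mem_erase.2 ⟨fun h => hx0 h.symm, h0⟩)
        (Finset.mem_erase.2 ⟨fun h => hxf h.symm, hF⟩)
      refine ⟨w ++ [fun y => if y = 0 then x else y], ?_⟩
      rw [run_append, hw, run_singleton]
      have hne : T.erase x ≠ ∅ := by
        intro h; rw [h] at hw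
        exact absurd (Finset.mem_erase.2 ⟨Ne.symm hx0, h0⟩) (by simp [h])
      have himg : (T.erase x).image (fun y => if y = 0 then x else y) = T.erase 0 := by
        ext y
        simp only [Finset.mem_image, Finset.mem_erase]
        constructor
        · rintro ⟨z, ⟨hzx, hzT⟩, rfl⟩
          by_cases hz0 : z = 0 <;> simp [hz0, hx0, Ne.symm hx0, hxT, hzx, hzT]
        · rintro ⟨hy0, hyT⟩
          by_cases hyx : y = x
          · exact ⟨0, ⟨Ne.symm hx0, h0⟩, by simp [hyx]⟩
          · exact ⟨y, ⟨hyx, hyT⟩, by simp [hy0]⟩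
      rw [step_of_mem _ hne (by rw [himg]; exact Finset.mem_erase.2 ⟨hf, hF⟩), himg,
        Finset.insert_erase h0]

lemma reach_valid (hn : 1 < n) (hf : f ≠ 0) (T : Finset (Fin n)) (hv : valid19' f T) :
    ∃ w, run19' f w ∅ = T := by
  by_cases hT : T = ∅
  · exact ⟨[], hT.symm⟩
  by_cases hF : f ∈ T
  · exact reach_zf hf T ((valid_iff T).1 hv hF) hF
  rcases eq_or_lt_of_le (Finset.one_le_card.2 (Finset.nonempty_iff_ne_empty.2 hT))
    with hc1 | hc2
  · -- singleton
    obtain ⟨x, rfl⟩ := Finset.card_eq_one.1 hc1.symm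
    have hxf : x ≠ f := fun h => hF (by simp [h])
    exact ⟨[fun _ => x], by
      rw [run_singleton, step_empty' (fun _ => x) (fun h => hxf h)]⟩
  · by_cases h0 : (0 : Fin n) ∈ T
    · -- 0 ∈ T, f ∉ T, card ≥ 2
      obtain ⟨a, ha, b, hb, hab⟩ := Finset.one_lt_card.1 hc2
      obtain ⟨x, hxT, hx0⟩ : ∃ x ∈ T, x ≠ 0 := by
        by_cases haa : a = 0
        · exact ⟨b, hb, fun h => hab (haa.trans h.symm)⟩
        · exact ⟨a, ha, haa⟩
      set P := insert f (T.erase x) with hP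
      have h0P : (0 : Fin n) ∈ P := by
        simp [hP, Finset.mem_erase, Ne.symm hx0, h0, Finset.mem_insert]
      obtain ⟨w, hw⟩ := reach_zf hf P h0P (Finset.mem_insert_self _ _)
      refine ⟨w ++ [fun y => if y = f then x else y], ?_⟩
      rw [run_append, hw, run_singleton]
      have hPne : P ≠ ∅ := fun h => by simp [h] at h0P
      have himg : P.image (fun y => if y = f then x else y) = T := by
        ext y
        simp only [hP, Finset.image_insert, Finset.mem_insert, Finset.mem_image,
          Finset.mem_erase, if_pos rfl]
        constructor
        · rintro (rfl | ⟨z, ⟨hzx, hzT⟩, rfl⟩)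
          · exact hxT
          · have : z ≠ f := fun h => hF (h ▸ hzT)
            simpa [this] using hzT
        · intro hyT
          by_cases hyx : y = x
          · exact Or.inl hyx
          · have hyf : y ≠ f := fun h => hF (h ▸ hyT)
            exact Or.inr ⟨y, ⟨hyx, hyT⟩, if_neg hyf⟩
      rw [step_of_ne _ hPne (by rw [himg]; exact hF), himg]
    · -- 0 ∉ T, f ∉ T, card ≥ 2
      obtain ⟨x, hxT, y, hyT, hxy⟩ := Finset.one_lt_card.1 hc2
      have hx0 : x ≠ 0 := fun h => h0 (h ▸ hxT)
      have hy0 : y ≠ 0 := fun h => h0 (h ▸ hyT)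
      have hxf : x ≠ f := fun h => hF (h ▸ hxT)
      have hyf : y ≠ f := fun h => hF (h ▸ hyT)
      set S := (T.erase x).erase y with hS
      set P := insert 0 (insert f S) with hP
      have hfP : f ∈ P := by simp [hP]
      obtain ⟨w, hw⟩ := reach_zf hf P (Finset.mem_insert_self _ _) hfP
      set g : Fin n → Fin n := fun z => if z = 0 then x else if z = f then y else z with hg
      refine ⟨w ++ [g], ?_⟩
      rw [run_append, hw, run_singleton]
      have hPne : P ≠ ∅ := fun h => by simp [h] at hfP
      have hzS : ∀ z ∈ S, z ≠ 0 ∧ z ≠ f := by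
        intro z hz
        have hzT : z ∈ T := Finset.mem_of_mem_erase (Finset.mem_of_mem_erase hz)
        exact ⟨fun h => h0 (h ▸ hzT), fun h => hF (h ▸ hzT)⟩
      have himg : P.image g = T := by
        ext u
        simp only [hP, Finset.image_insert, Finset.mem_insert, Finset.mem_image]
        constructor
        · rintro (rfl | rfl | ⟨z, hz, rfl⟩)
          · simpa [hg] using hxT
          · simpa [hg, hf] using hyT
          · obtain ⟨hz0, hzf⟩ := hzS z hz
            simpa [hg, hz0, hzf] using
              Finset.mem_of_mem_erase (Finset.mem_of_mem_erase hz)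
        · intro huT
          by_cases hux : u = x
          · exact Or.inl (by simp [hg, hux])
          by_cases huy : u = y
          · exact Or.inr (Or.inl (by simp [hg, hf, huy]))
          · refine Or.inr (Or.inr ⟨u, ?_, ?_⟩)
            · exact Finset.mem_erase.2 ⟨huy, Finset.mem_erase.2 ⟨hux, huT⟩⟩
            · have : u ≠ 0 := fun h => h0 (h ▸ huT)
              have h2 : u ≠ f := fun h => hF (h ▸ huT)
              simp [hg, this, h2]
      rw [step_of_ne _ hPne (by rw [himg]; exact hF), himg]

abbrev isFinal19' (f : Fin n) (T : Finset (Fin n)) : Prop := T = ∅ ∨ f ∈ T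

lemma probe_mem (hf : f ≠ 0) {x : Fin n} {A : Finset (Fin n)} (hA : A ≠ ∅) (hx : x ∈ A) :
    isFinal19' f (step19' f (fun y => if y = x then f else 0) A) := by
  have hfi : f ∈ A.image (fun y => if y = x then f else 0) :=
    Finset.mem_image.2 ⟨x, hx, if_pos rfl⟩
  rw [step_of_mem _ hA hfi]
  exact Or.inr (Finset.mem_insert.2 (Or.inr hfi))

lemma probe_not_mem (hf : f ≠ 0) {x : Fin n} {B : Finset (Fin n)} (hB : B ≠ ∅) (hx : x ∉ B) :
    ¬ isFinal19' f (step19' f (fun y => if y = x then f else 0) B) := by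
  have himg : B.image (fun y => if y = x then f else 0) = {0} := by
    ext u
    simp only [Finset.mem_image, Finset.mem_singleton]
    constructor
    · rintro ⟨z, hz, rfl⟩
      have : z ≠ x := fun h => hx (by rwa [h] at hz)
      simp [this]
    · rintro rfl
      obtain ⟨z, hz⟩ := Finset.nonempty_iff_ne_empty.2 hB
      exact ⟨z, hz, if_neg (fun h => hx (by rwa [h] at hz))⟩
  rw [step_of_ne _ hB (by rw [himg]; simp [hf]), himg]
  rintro (h | h)
  · simp at h
  · simp at h; exact hf h

lemma distinguish (hf : f ≠ 0) (T T' : Finset (Fin n))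
    (hv : valid19' f T) (hv' : valid19' f T') (hne : T ≠ T') :
    ∃ w, ¬ (isFinal19' f (run19' f w T) ↔ isFinal19' f (run19' f w T')) := by
  -- helper for the empty/nonempty case
  have empty_case : ∀ U : Finset (Fin n), valid19' f U → U ≠ ∅ →
      ∃ w, ¬ (isFinal19' f (run19' f w (∅ : Finset (Fin n))) ↔ isFinal19' f (run19' f w U)) := by
    intro U hvU hU
    by_cases hFU : f ∈ U
    · have h0U : (0 : Fin n) ∈ U := (valid_iff U).1 hvU hFU
      refine ⟨[id], ?_⟩
      rw [run_singleton, run_singleton, step_empty' id (by exact fun h => hf h.symm),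
        step_of_mem id hU (by simpa using hFU)]
      simp only [Finset.image_id]
      intro hiff
      have h1 : isFinal19' f (insert 0 U) := Or.inr (Finset.mem_insert.2 (Or.inr hFU))
      have h2 := hiff.2 h1
      rcases h2 with h | h
      · simp at h
      · rw [Finset.mem_singleton] at h
        exact hf (by simpa using h)
    · refine ⟨[], ?_⟩
      show ¬ (isFinal19' f ∅ ↔ isFinal19' f U)
      intro hiff
      rcases hiff.1 (Or.inl rfl) with h | h
      · exact hU h
      · exact hFU h
  by_cases hT : T = ∅
  · subst hT
    exact empty_case T' hv' (Ne.symm hne)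
  by_cases hT' : T' = ∅
  · subst hT'
    obtain ⟨w, hw⟩ := empty_case T hv hT
    exact ⟨w, fun h => hw (Iff.comm.1 h)⟩
  · -- both nonempty
    obtain ⟨x, hx⟩ : ∃ x, (x ∈ T ∧ x ∉ T') ∨ (x ∈ T' ∧ x ∉ T) := by
      by_contra hc
      push_neg at hc
      apply hne
      ext y
      exact ⟨(hc y).1, (hc y).2⟩
    rcases hx with ⟨hxT, hxT'⟩ | ⟨hxT', hxT⟩
    · refine ⟨[fun y => if y = x then f else 0], ?_⟩
      rw [run_singleton, run_singleton]
      intro hiff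
      exact probe_not_mem hf hT' hxT' (hiff.1 (probe_mem hf hT hxT))
    · refine ⟨[fun y => if y = x then f else 0], ?_⟩
      rw [run_singleton, run_singleton]
      intro hiff
      exact probe_not_mem hf hT hxT (hiff.2 (probe_mem hf hT' hxT'))

lemma count_valid (hn : 1 < n) (hf : f ≠ 0) :
    (Finset.univ.filter (fun T : Finset (Fin n) =>
        (0 : Fin n) ∈ T ∨ ((0 : Fin n) ∉ T ∧ f ∉ T))).card = 2 ^ (n-1) + 2 ^ (n-2) := by
  rw [Finset.filter_or, Finset.card_union_of_disjoint (by
    rw [Finset.disjoint_left]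
    intro T h1 h2
    simp only [Finset.mem_filter] at h1 h2
    exact h2.2.1 h1.2)]
  have hcard1 : (Finset.univ.filter (fun T : Finset (Fin n) => (0:Fin n) ∈ T)).card
      = 2 ^ (n - 1) := by
    have : (Finset.univ.filter (fun T : Finset (Fin n) => (0:Fin n) ∈ T)).card
        = ((Finset.univ.erase (0 : Fin n)).powerset).card := by
      refine Finset.card_bij' (fun T _ => T.erase 0) (fun S _ => insert 0 S)
        (fun T hT => ?_) (fun S hS => ?_) (fun T hT => ?_) (fun S hS => ?_)
      · rw [Finset.mem_powerset]
        exact Finset.erase_subset_erase _ (Finset.subset_univ T)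
      · simp only [Finset.mem_filter]
        exact ⟨Finset.mem_univ _, Finset.mem_insert_self _ _⟩
      · simp only [Finset.mem_filter] at hT
        exact Finset.insert_erase hT.2
      · rw [Finset.mem_powerset] at hS
        exact Finset.erase_insert (fun h => (Finset.mem_erase.1 (hS h)).1 rfl)
    rw [this, Finset.card_powerset, Finset.card_erase_of_mem (Finset.mem_univ _),
      Finset.card_univ, Fintype.card_fin]
  have hcard2 : (Finset.univ.filter (fun T : Finset (Fin n) =>
      (0:Fin n) ∉ T ∧ f ∉ T)).card = 2 ^ (n - 2) := by
    have heq : Finset.univ.filter (fun T : Finset (Fin n) => (0:Fin n) ∉ T ∧ f ∉ T)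
        = ((Finset.univ.erase (0 : Fin n)).erase f).powerset := by
      ext T
      simp only [Finset.mem_filter, Finset.mem_univ, true_and, Finset.mem_powerset,
        Finset.subset_erase, Finset.subset_univ, true_and]
    rw [heq, Finset.card_powerset, Finset.card_erase_of_mem
      (Finset.mem_erase.2 ⟨hf, Finset.mem_univ _⟩),
      Finset.card_erase_of_mem (Finset.mem_univ _), Finset.card_univ, Fintype.card_fin,
      Nat.sub_sub]
  rw [hcard1, hcard2]

lemma run_cons (g : Fin n → Fin n) (w : List (Fin n → Fin n)) (T : Finset (Fin n)) :
    run19' f (g :: w) T = run19' f w (step19' f g T) := rfl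

lemma run_valid {T : Finset (Fin n)} (w : List (Fin n → Fin n)) (h : valid19' f T) :
    valid19' f (run19' f w T) := by
  induction w generalizing T with
  | nil => exact h
  | cons g w ih => rw [run_cons]; exact ih (step_valid g T)

lemma sc_eq (hn : 1 < n) (hf : f ≠ 0) :
    sInf {k : ℕ | ∃ M : DFA (Fin n → Fin n) (Fin k),
        M.accepts = ((⟨fun T g => step19' f g T, ∅, {T | isFinal19' f T}⟩ :
          DFA (Fin n → Fin n) (Finset (Fin n))).accepts)}
      = 2 ^ (n - 1) + 2 ^ (n - 2) := by
  classical
  letI : DecidablePred (valid19' f) := fun _ => Classical.dec _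
  set N := 2 ^ (n - 1) + 2 ^ (n - 2) with hN
  set D : DFA (Fin n → Fin n) (Finset (Fin n)) :=
    ⟨fun T g => step19' f g T, ∅, {T | isFinal19' f T}⟩ with hD
  have hDeval : ∀ (w : List (Fin n → Fin n)) (T : Finset (Fin n)),
      D.evalFrom T w = run19' f w T := fun _ _ => rfl
  have hDacc : ∀ x : List (Fin n → Fin n),
      x ∈ D.accepts ↔ isFinal19' f (run19' f x ∅) := fun x => Iff.rfl
  have hvempty : valid19' f (∅ : Finset (Fin n)) := Or.inr (by simp)
  -- cardinality of the valid states
  have hcardV : Fintype.card {T : Finset (Fin n) // valid19' f T} = N := by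
    rw [Fintype.card_subtype]
    convert count_valid hn hf using 2
    ext T
    simp only [Finset.mem_filter, valid19']
  set e := Fintype.equivFinOfCardEq hcardV with he
  -- the small DFA
  set M : DFA (Fin n → Fin n) (Fin N) :=
    ⟨fun s g => e ⟨step19' f g (e.symm s).1, step_valid g _⟩,
     e ⟨∅, hvempty⟩, {s | isFinal19' f (e.symm s).1}⟩ with hM
  have hMeval : ∀ (w : List (Fin n → Fin n)) (T : {T : Finset (Fin n) // valid19' f T}),
      M.evalFrom (e T) w = e ⟨run19' f w T.1, run_valid w T.2⟩ := by
    intro w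
    induction w with
    | nil => intro T; rfl
    | cons g w ih =>
      intro T
      have hstep : M.evalFrom (e T) (g :: w)
          = M.evalFrom (e ⟨step19' f g T.1, step_valid g T.1⟩) w := by
        show M.evalFrom (M.step (e T) g) w = _
        congr 1
        show e ⟨step19' f g (e.symm (e T)).1, _⟩ = _
        rw [Equiv.symm_apply_apply]
      rw [hstep, ih ⟨step19' f g T.1, step_valid g T.1⟩]
      rfl
  have hMacc : M.accepts = D.accepts := by
    ext x
    rw [DFA.mem_accepts, DFA.mem_accepts]
    show M.evalFrom (e ⟨∅, hvempty⟩) x ∈ M.accept ↔ _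
    rw [hMeval x ⟨∅, hvempty⟩]
    show isFinal19' f (e.symm (e ⟨run19' f x ∅, _⟩)).1 ↔ isFinal19' f (run19' f x ∅)
    rw [Equiv.symm_apply_apply]
  have hmem : N ∈ {k : ℕ | ∃ M' : DFA (Fin n → Fin n) (Fin k), M'.accepts = D.accepts} :=
    ⟨M, hMacc⟩
  have hlb : ∀ k ∈ {k : ℕ | ∃ M' : DFA (Fin n → Fin n) (Fin k), M'.accepts = D.accepts},
      N ≤ k := by
    rintro k ⟨M', hM'⟩
    set φ : {T : Finset (Fin n) // valid19' f T} → Fin k :=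
      fun T => M'.evalFrom M'.start (Classical.choose (reach_valid hn hf T.1 T.2)) with hφ
    have hinj : Function.Injective φ := by
      intro T T' hTT'
      by_contra hne
      have hne' : T.1 ≠ T'.1 := fun h => hne (Subtype.ext h)
      obtain ⟨z, hz⟩ := distinguish hf T.1 T'.1 T.2 T'.2 hne'
      apply hz
      have key : ∀ (U : {T : Finset (Fin n) // valid19' f T}),
          (isFinal19' f (run19' f z U.1) ↔
            M'.evalFrom (φ U) z ∈ M'.accept) := by
        intro U
        have hwU := Classical.choose_spec (reach_valid hn hf U.1 U.2)
        set wU := Classical.choose (reach_valid hn hf U.1 U.2)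
        have h1 : (wU ++ z) ∈ D.accepts ↔ isFinal19' f (run19' f z U.1) := by
          rw [hDacc, run_append, hwU]
        have h2 : (wU ++ z) ∈ M'.accepts ↔ M'.evalFrom (φ U) z ∈ M'.accept := by
          rw [DFA.mem_accepts]
          show M'.evalFrom M'.start (wU ++ z) ∈ M'.accept ↔ _
          rw [M'.evalFrom_of_append]
        rw [← h1, ← hM', h2]
      rw [key T, key T', hTT']
    calc N = Fintype.card {T : Finset (Fin n) // valid19' f T} := hcardV.symm
      _ ≤ Fintype.card (Fin k) := Fintype.card_le_of_injective φ hinj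
      _ = k := Fintype.card_fin k
  exact le_antisymm (Nat.sInf_le hmem) (le_csInf ⟨N, hmem⟩ hlb)

/-- For `m = 1`, `n > 1` and final zone `{f}` with `f ≠ 0`: there are exactly
`2^(n-1) + 2^(n-2)` valid tableaux, all of them are accessible, they are
pairwise Nerode-inequivalent, and the state complexity of the language of the
construction is `2^(n-1) + 2^(n-2) = (3/4)·2^n`. -/
theorem small_automata_case (n : ℕ) [NeZero n] (hn : 1 < n)
    (f : Fin n) (hf : f ≠ 0) :
    ((Finset.univ.filter (fun T : Finset (Fin n) =>
        (0 : Fin n) ∈ T ∨ ((0 : Fin n) ∉ T ∧ f ∉ T))).card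
      = 2 ^ (n - 1) + 2 ^ (n - 2)) ∧
    (∀ T : Finset (Fin n), valid19 f T → ∃ w, run19 f w ∅ = T) ∧
    (∀ T T' : Finset (Fin n), valid19 f T → valid19 f T' → T ≠ T' →
      ¬ ∀ w, (isFinal19 f (run19 f w T) ↔ isFinal19 f (run19 f w T'))) ∧
    (scLanguage ((⟨fun T g => step19 f g T, ∅, {T | isFinal19 f T}⟩ :
        DFA (Fin n → Fin n) (Finset (Fin n))).accepts)
      = 2 ^ (n - 1) + 2 ^ (n - 2)) := by
  have hrun : ∀ (w : List (Fin n → Fin n)) (T : Finset (Fin n)),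
      run19 f w T = run19' f w T := fun _ _ => rfl
  refine ⟨count_valid hn hf, ?_, ?_, ?_⟩
  · intro T hv
    obtain ⟨w, hw⟩ := reach_valid hn hf T hv
    exact ⟨w, by rw [hrun]; exact hw⟩
  · intro T T' hv hv' hne hall
    obtain ⟨w, hw⟩ := distinguish hf T T' hv hv' hne
    apply hw
    have := hall w
    rw [hrun, hrun] at this
    exact this
  · show sInf _ = _
    have : ((⟨fun T g => step19 f g T, ∅, {T | isFinal19 f T}⟩ :
        DFA (Fin n → Fin n) (Finset (Fin n)))) =
        (⟨fun T g => step19' f g T, ∅, {T | isFinal19' f T}⟩ :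
          DFA (Fin n → Fin n) (Finset (Fin n))) := rfl
    rw [this]
    exact sc_eq hn hf
end
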